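/- arXiv:0807.3364 — 2 statements merged into one kernel-verified Lean document; each statement's English description precedes it below -/
import Mathlib

section
/- If F : S → X satisfies the separation property (for any α, β ∈ S there is u with u ≤_α F(α) and u ≥_β F(β)), and α, β ∈ S are π-adjacent for an ordered partition π = (X_1,...,X_m), with F(α) ∈ α(X_i) and F(β) ∈ β(X_j), then i = j. -/
/-- The inversion distance between two permutations of `Fin n`: the number of
pairs `{x,y}` (with `x < y`) appearing in opposite relative orders in the linear
orders induced by `α` and `β`, where `x <_α y ↔ α⁻¹ x < α⁻¹ y`. -/
def invDist {n : ℕ} (α β : Equiv.Perm (Fin n)) : ℕ :=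
  (Finset.univ.filter fun p : Fin n × Fin n =>
    p.1 < p.2 ∧ ¬ ((α⁻¹ p.1 < α⁻¹ p.2) ↔ (β⁻¹ p.1 < β⁻¹ p.2))).card
/-- `b` assigns to each `i : Fin n` the endpoints of the block of an ordered
partition of `(Fin n, <)` into consecutive intervals, and `τ` is the permutation
reversing the order of the elements inside every block. -/
def IsBlockData {n : ℕ} (b : Fin n → Fin n × Fin n) (τ : Equiv.Perm (Fin n)) : Prop :=
  ∀ i : Fin n, (b i).1 ≤ i ∧ i ≤ (b i).2 ∧
    (∀ j : Fin n, (b i).1 ≤ j → j ≤ (b i).2 → b j = b i) ∧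
    ((τ i : ℕ) = (b i).1 + (b i).2 - (i : ℕ))

/-- `α` and `β` are adjacent in the big permutograph: `α = β * τ_π` for the
block-reversal permutation `τ_π` of some nontrivial ordered partition `π`. -/
def PermAdjacent {n : ℕ} (α β : Equiv.Perm (Fin n)) : Prop :=
  ∃ τ : Equiv.Perm (Fin n), (∃ b, IsBlockData b τ) ∧ τ ≠ 1 ∧ α = β * τ
/-- `F` satisfies the separation property on `S`: for any `α, β ∈ S` there is
`u` with `u ≤_α F(α)` and `u ≥_β F(β)`, where `x ≤_α y ↔ α⁻¹ x ≤ α⁻¹ y`. -/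
def SepProp {n : ℕ} (S : Set (Equiv.Perm (Fin n))) (F : Equiv.Perm (Fin n) → Fin n) : Prop :=
  ∀ α ∈ S, ∀ β ∈ S, ∃ u : Fin n, α⁻¹ u ≤ α⁻¹ (F α) ∧ β⁻¹ (F β) ≤ β⁻¹ u

/-- `F` is a lattice polynomial on `S`: `F(α) = ⋁_{K ∈ 𝒦} ⋀_{j ∈ K} j`, where the
join and meet are taken in the linear order `≤_α` induced by `α`. -/
def IsLatticePoly {n : ℕ} (S : Set (Equiv.Perm (Fin n)))
    (F : Equiv.Perm (Fin n) → Fin n) : Prop :=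
  ∃ (𝒦 : Finset (Finset (Fin n))) (h𝒦 : 𝒦.Nonempty) (hK : ∀ K ∈ 𝒦, K.Nonempty),
    ∀ α ∈ S, F α = α (𝒦.attach.sup' (Finset.attach_nonempty_iff.mpr h𝒦)
      fun K => K.1.inf' (hK K.1 K.2) fun j => α⁻¹ j)

/-!
The positions `α⁻¹ x` and `β⁻¹ x` differ by `τ`, which moves no element out of its block. Since
the blocks are consecutive intervals, the left endpoint `(b i).1` of the block of `i` is monotone
in `i`. The separation witness `u` for `(α, β)` then puts the block of `β⁻¹ (F β)` weakly before
that of `α⁻¹ (F α)`, the witness for `(β, α)` gives the reverse, and a block is determined by its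
left endpoint.
-/

namespace IsBlockData

variable {n : ℕ} {b : Fin n → Fin n × Fin n} {τ : Equiv.Perm (Fin n)}

theorem block_fst (hb : IsBlockData b τ) (i : Fin n) : b (b i).1 = b i :=
  (hb i).2.2.1 _ le_rfl ((hb i).1.trans (hb i).2.1)

theorem eq_of_fst_eq (hb : IsBlockData b τ) {i j : Fin n} (h : (b i).1 = (b j).1) : b i = b j := by
  rw [← hb.block_fst i, h, hb.block_fst j]

theorem fst_mono (hb : IsBlockData b τ) : Monotone fun i => (b i).1 := by
  intro i j hij
  by_contra! hlt
  -- `(b i).1` would lie in the block of `j`, so the two blocks coincide.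
  have hsame : b (b i).1 = b j :=
    (hb j).2.2.1 _ hlt.le (((hb i).1.trans hij).trans (hb j).2.1)
  rw [hb.block_fst] at hsame
  exact hlt.ne (congrArg Prod.fst hsame).symm

theorem block_apply (hb : IsBlockData b τ) (i : Fin n) : b (τ i) = b i := by
  obtain ⟨h₁, h₂, hblock, hτ⟩ := hb i
  rw [Fin.le_def] at h₁ h₂
  exact hblock _ (Fin.le_def.2 (by omega)) (Fin.le_def.2 (by omega))

theorem block_inv_apply (hb : IsBlockData b τ) (i : Fin n) : b (τ⁻¹ i) = b i := by
  simpa using (hb.block_apply (τ⁻¹ i)).symm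

theorem fst_le_of_separated (hb : IsBlockData b τ) {α β : Equiv.Perm (Fin n)}
    (hαβ : ∀ x, b (α⁻¹ x) = b (β⁻¹ x)) {u p q : Fin n} (hu : α⁻¹ u ≤ p) (hq : q ≤ β⁻¹ u) :
    (b q).1 ≤ (b p).1 :=
  calc (b q).1 ≤ (b (β⁻¹ u)).1 := hb.fst_mono hq
    _ = (b (α⁻¹ u)).1 := by rw [hαβ]
    _ ≤ (b p).1 := hb.fst_mono hu

end IsBlockData

theorem sepProp_same_block_general {n : ℕ} (S : Set (Equiv.Perm (Fin n)))
    (F : Equiv.Perm (Fin n) → Fin n) (hF : SepProp S F)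
    (α β : Equiv.Perm (Fin n)) (hα : α ∈ S) (hβ : β ∈ S)
    (τ : Equiv.Perm (Fin n)) (b : Fin n → Fin n × Fin n)
    (hb : IsBlockData b τ) (hadj : α = β * τ) :
    b (α⁻¹ (F α)) = b (β⁻¹ (F β)) := by
  have hαβ : ∀ x, b (α⁻¹ x) = b (β⁻¹ x) := fun x => by
    rw [hadj, mul_inv_rev, Equiv.Perm.mul_apply, hb.block_inv_apply]
  obtain ⟨u, hu, hβu⟩ := hF α hα β hβ
  obtain ⟨v, hv, hαv⟩ := hF β hβ α hα
  exact hb.eq_of_fst_eq <| le_antisymm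
    (hb.fst_le_of_separated (fun x => (hαβ x).symm) hv hαv)
    (hb.fst_le_of_separated hαβ hu hβu)

/-- If `F` satisfies the separation property and `α, β ∈ S` are `π`-adjacent with
`F(α) ∈ α(X_i)` and `F(β) ∈ β(X_j)`, then `i = j`: the positions `α⁻¹(F(α))` and
`β⁻¹(F(β))` lie in the same block of `π`. -/
theorem sepProp_same_block {n : ℕ} (S : Set (Equiv.Perm (Fin n)))
    (F : Equiv.Perm (Fin n) → Fin n) (hF : SepProp S F)
    (α β : Equiv.Perm (Fin n)) (hα : α ∈ S) (hβ : β ∈ S)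
    (τ : Equiv.Perm (Fin n)) (b : Fin n → Fin n × Fin n)
    (hb : IsBlockData b τ) (hτ : τ ≠ 1) (hadj : α = β * τ) :
    b (α⁻¹ (F α)) = b (β⁻¹ (F β)) :=
  sepProp_same_block_general S F hF α β hα hβ τ b hb hadj
end

section
/- Every continuous piecewise linear function f on a convex closed domain D ⊆ ℝ^d is representable as a difference of two concave piecewise linear functions. -/
/-- A closed domain in `ℝ^d`: the closure of a nonempty open set. -/
def IsClosedDomain {d : ℕ} (P : Set (Fin d → ℝ)) : Prop :=
  ∃ U : Set (Fin d → ℝ), U.Nonempty ∧ IsOpen U ∧ P = closure U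

/-- `f` is piecewise linear on `D`: `D` is a finite union of closed domains on
each of which `f` agrees with an affine linear function. -/
def IsPLOn {d : ℕ} (D : Set (Fin d → ℝ)) (f : (Fin d → ℝ) → ℝ) : Prop :=
  ∃ 𝒟 : Finset (Set (Fin d → ℝ)),
    (∀ P ∈ 𝒟, IsClosedDomain P) ∧ (⋃ P ∈ 𝒟, P) = D ∧
    ∀ P ∈ 𝒟, ∃ g : (Fin d → ℝ) →ᵃ[ℝ] ℝ, ∀ x ∈ P, f x = g x

/-- `f` coincides on `D` with the max-min lattice polynomial
`x ↦ ⋁_{K ∈ 𝒦} ⋀_{j ∈ K} g j x` for some nonempty family `𝒦` of nonempty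
subsets of `{1,…,n}`. -/
def MaxMinRep {d n : ℕ} (D : Set (Fin d → ℝ)) (g : Fin n → ((Fin d → ℝ) →ᵃ[ℝ] ℝ))
    (f : (Fin d → ℝ) → ℝ) : Prop :=
  ∃ (𝒦 : Finset (Finset (Fin n))) (h𝒦 : 𝒦.Nonempty) (hK : ∀ K ∈ 𝒦, K.Nonempty),
    ∀ x ∈ D, f x = 𝒦.attach.sup' (Finset.attach_nonempty_iff.mpr h𝒦)
      (fun K => K.1.inf' (hK K.1 K.2) (fun j => g j x))

/-!
Let `g₁, …, gₙ` be the affine pieces of `f` and `S = ∑ᵢ ∑ⱼ |gᵢ - gⱼ|`. Then `-S` is concave and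
`f = (f - S) - (-S)`, so everything rests on the concavity of `f - S`. Restricted to a segment this
is a local property. Near any point the continuous selection `f` equals one piece `gⱼ` on the left
and one piece `gᵢ` on the right, so locally `f = max (gᵢ, gⱼ)` or `f = min (gᵢ, gⱼ)`; in the first
case the summand `|gᵢ - gⱼ|` of `S` turns `f` into `min (gᵢ, gⱼ)`. Piecewise linearity of sums is
obtained by refining closed covers, which the Baire category theorem turns back into closed domains.
-/

open Set Filter Topology

section SumAbsDiff

variable {E ι : Type*} [AddCommGroup E] [Module ℝ E] [Fintype ι]

noncomputable def sumAbsDiff (g : ι → E →ᵃ[ℝ] ℝ) (x : E) : ℝ :=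
  ∑ p : ι × ι, |g p.1 x - g p.2 x|

lemma AffineMap.convexOn_abs {s : Set E} (hs : Convex ℝ s) (A : E →ᵃ[ℝ] ℝ) :
    ConvexOn ℝ s fun x => |A x| :=
  (convexOn_univ_norm.comp_affineMap A).subset (subset_univ _) hs

lemma AffineMap.concaveOn {s : Set E} (hs : Convex ℝ s) (A : E →ᵃ[ℝ] ℝ) : ConcaveOn ℝ s A :=
  ((concaveOn_id convex_univ).comp_affineMap A).subset (subset_univ _) hs

lemma convexOn_sum_abs_affineMap {κ : Type*} {s : Set E} (hs : Convex ℝ s) (t : Finset κ)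
    (A : κ → E →ᵃ[ℝ] ℝ) : ConvexOn ℝ s fun x => ∑ k ∈ t, |A k x| := by
  classical
  induction t using Finset.induction_on with
  | empty => simpa using convexOn_const (0 : ℝ) hs
  | insert k t hk ih =>
    refine ((AffineMap.convexOn_abs hs (A k)).add ih).congr fun x _ => ?_
    simp [Finset.sum_insert hk]

lemma convexOn_sumAbsDiff {s : Set E} (hs : Convex ℝ s) (g : ι → E →ᵃ[ℝ] ℝ) :
    ConvexOn ℝ s (sumAbsDiff g) :=
  (convexOn_sum_abs_affineMap hs Finset.univ fun p : ι × ι => g p.1 - g p.2).congr fun x _ => by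
    simp [sumAbsDiff]

lemma concaveOn_sub_sumAbsDiff_of_eqOn {s : Set E} (hs : Convex ℝ s) {g : ι → E →ᵃ[ℝ] ℝ}
    {φ : E → ℝ} (i j : ι) (hφ : EqOn φ (fun x => max (g i x) (g j x)) s ∨
      EqOn φ (fun x => min (g i x) (g j x)) s) :
    ConcaveOn ℝ s (φ - sumAbsDiff g) := by
  classical
  have hmin : ConcaveOn ℝ s fun x => min (g i x) (g j x) :=
    ((g i).concaveOn hs).inf ((g j).concaveOn hs)
  rcases hφ with hφmax | hφmin
  · -- `max a b - |a - b| = min a b` absorbs the `(i, j)` term of the sum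
    have hrest := convexOn_sum_abs_affineMap hs (Finset.univ.erase (i, j))
      fun p : ι × ι => g p.1 - g p.2
    refine (hmin.sub hrest).congr fun x hx => ?_
    simp only [Pi.sub_apply, sumAbsDiff, hφmax hx, AffineMap.coe_sub]
    rw [← Finset.add_sum_erase _ _ (Finset.mem_univ (i, j))]
    have := max_sub_min_eq_abs (g j x) (g i x)
    simp only [max_comm (g j x), min_comm (g j x)] at this
    linarith
  · exact (hmin.congr fun x hx => (hφmin hx).symm).sub (convexOn_sumAbsDiff hs g)

end SumAbsDiff

section Interval

lemma AffineMap.apply_eq_add_mul_linear_one (ℓ : ℝ →ᵃ[ℝ] ℝ) (s t : ℝ) :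
    ℓ t = ℓ s + (t - s) * ℓ.linear 1 := by
  have h := ℓ.linearMap_vsub t s
  rw [vsub_eq_sub, vsub_eq_sub, ← mul_one (t - s), ← smul_eq_mul, LinearMap.map_smul,
    smul_eq_mul] at h
  linarith

lemma AffineMap.eq_of_eqOn_pair {ℓ m : ℝ →ᵃ[ℝ] ℝ} {s t : ℝ} (hst : s ≠ t) (hs : ℓ s = m s)
    (ht : ℓ t = m t) : ℓ = m := by
  have hslope : ℓ.linear 1 = m.linear 1 := by
    have := ℓ.apply_eq_add_mul_linear_one s t
    have := m.apply_eq_add_mul_linear_one s t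
    have hst' : t - s ≠ 0 := sub_ne_zero.2 hst.symm
    apply mul_left_cancel₀ hst'
    linarith
  ext u
  rw [ℓ.apply_eq_add_mul_linear_one s u, m.apply_eq_add_mul_linear_one s u, hs, hslope]

lemma AffineMap.eventually_ne_nhdsNE {ℓ m : ℝ →ᵃ[ℝ] ℝ} (h : ℓ ≠ m) (c : ℝ) :
    ∀ᶠ t in 𝓝[≠] c, ℓ t ≠ m t := by
  by_cases hc : ℓ c = m c
  · filter_upwards [self_mem_nhdsWithin] with t ht heq
    exact h (AffineMap.eq_of_eqOn_pair (Ne.symm ht) hc heq)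
  · exact nhdsWithin_le_nhds <|
      (isOpen_ne_fun ℓ.continuous_of_finiteDimensional m.continuous_of_finiteDimensional).mem_nhds hc

variable {ι : Type*} [Fintype ι]

lemma IsPreconnected.exists_eqOn_of_forall_exists_eq {X : Type*} [TopologicalSpace X]
    {s : Set X} (hs : IsPreconnected s) (hne : s.Nonempty) {φ : X → ℝ} (hφ : ContinuousOn φ s)
    {ℓ : ι → X → ℝ} (hℓ : ∀ i, Continuous (ℓ i)) (hsel : ∀ t ∈ s, ∃ i, φ t = ℓ i t)
    (hsep : ∀ i j, ∀ t ∈ s, ℓ i t = ℓ j t → EqOn (ℓ i) (ℓ j) s) :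
    ∃ i, EqOn φ (ℓ i) s := by
  have := isPreconnected_iff_preconnectedSpace.1 hs
  obtain ⟨t₀, ht₀⟩ := hne
  obtain ⟨k, hk⟩ := hsel t₀ ht₀
  have hclosed : ∀ i, IsClosed {t : s | φ t = ℓ i t} := fun i =>
    isClosed_eq hφ.domRestrict ((hℓ i).comp continuous_subtype_val)
  have hcompl : {t : s | φ t = ℓ k t}ᶜ =
      ⋃ i ∈ {i | ∀ t ∈ s, ℓ i t ≠ ℓ k t}, {t : s | φ t = ℓ i t} := by
    ext ⟨t, ht⟩
    simp only [mem_compl_iff, mem_ofPred_eq, mem_iUnion, exists_prop]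
    constructor
    · intro hne
      obtain ⟨i, hi⟩ := hsel t ht
      refine ⟨i, fun u hu hiu => hne ?_, hi⟩
      rw [hi, hsep i k u hu hiu ht]
    · rintro ⟨i, hi, hφi⟩ hφk
      exact hi t ht (hφi ▸ hφk)
  have hclopen : IsClopen {t : s | φ t = ℓ k t} :=
    ⟨hclosed k, by
      rw [← isClosed_compl_iff, hcompl]
      exact (toFinite _).isClosed_biUnion fun i _ => hclosed i⟩
  have huniv := hclopen.eq_univ ⟨⟨t₀, ht₀⟩, hk⟩
  exact ⟨k, fun t ht => (huniv.symm ▸ mem_univ (⟨t, ht⟩ : s) :)⟩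

lemma exists_eqOn_Icc_of_forall_mem_Ioo {ℓ : ι → ℝ →ᵃ[ℝ] ℝ} {φ : ℝ → ℝ} {a b : ℝ} (hab : a < b)
    (hφ : ContinuousOn φ (Icc a b)) (hsel : ∀ t ∈ Ioo a b, ∃ i, φ t = ℓ i t)
    (hsep : ∀ i j, ∀ t ∈ Ioo a b, ℓ i t = ℓ j t → ℓ i = ℓ j) :
    ∃ i, EqOn φ (ℓ i) (Icc a b) := by
  obtain ⟨i, hi⟩ := isPreconnected_Ioo.exists_eqOn_of_forall_exists_eq (nonempty_Ioo.2 hab)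
    (hφ.mono Ioo_subset_Icc_self) (fun i => (ℓ i).continuous_of_finiteDimensional) hsel
    fun i j t ht h => by rw [hsep i j t ht h]; exact eqOn_refl _ _
  exact ⟨i, hi.of_subset_closure hφ (ℓ i).continuous_of_finiteDimensional.continuousOn
    Ioo_subset_Icc_self (closure_Ioo hab.ne).ge⟩

lemma eqOn_max_or_min_of_eqOn_Icc {ℓ m : ℝ →ᵃ[ℝ] ℝ} {φ : ℝ → ℝ} {a b c : ℝ} (hc : ℓ c = m c)
    (hleft : EqOn φ m (Icc a c)) (hright : EqOn φ ℓ (Icc c b)) :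
    EqOn φ (fun t => max (ℓ t) (m t)) (Icc a b) ∨ EqOn φ (fun t => min (ℓ t) (m t)) (Icc a b) := by
  have hdiff : ∀ t, ℓ t - m t = (t - c) * (ℓ.linear 1 - m.linear 1) := fun t => by
    rw [ℓ.apply_eq_add_mul_linear_one c t, m.apply_eq_add_mul_linear_one c t, hc]; ring
  rcases le_total 0 (ℓ.linear 1 - m.linear 1) with hk | hk
  · left
    intro t ht
    rcases le_total t c with htc | hct
    · rw [hleft ⟨ht.1, htc⟩]
      exact (max_eq_right (by nlinarith [hdiff t])).symm
    · rw [hright ⟨hct, ht.2⟩]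
      exact (max_eq_left (by nlinarith [hdiff t])).symm
  · right
    intro t ht
    rcases le_total t c with htc | hct
    · rw [hleft ⟨ht.1, htc⟩]
      exact (min_eq_right (by nlinarith [hdiff t])).symm
    · rw [hright ⟨hct, ht.2⟩]
      exact (min_eq_left (by nlinarith [hdiff t])).symm

lemma exists_eqOn_max_or_min_near (ℓ : ι → ℝ →ᵃ[ℝ] ℝ) {φ : ℝ → ℝ}
    (hφ : ContinuousOn φ (Icc 0 1)) (hsel : ∀ t ∈ Icc (0 : ℝ) 1, ∃ i, φ t = ℓ i t)
    {c : ℝ} (hc : c ∈ Ioo (0 : ℝ) 1) :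
    ∃ ε > 0, Icc (c - ε) (c + ε) ⊆ Icc 0 1 ∧ ∃ i j,
      EqOn φ (fun t => max (ℓ i t) (ℓ j t)) (Icc (c - ε) (c + ε)) ∨
      EqOn φ (fun t => min (ℓ i t) (ℓ j t)) (Icc (c - ε) (c + ε)) := by
  have hsep : ∀ᶠ t in 𝓝[≠] c, ∀ i j, ℓ i ≠ ℓ j → ℓ i t ≠ ℓ j t := by
    refine eventually_all.2 fun i => eventually_all.2 fun j => ?_
    by_cases h : ℓ i = ℓ j
    · exact univ_mem' fun _ h' => absurd h h'
    · filter_upwards [(ℓ i).eventually_ne_nhdsNE h c] with t ht _ using ht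
  obtain ⟨r, hr, hball⟩ := Metric.eventually_nhds_iff_ball.1
    ((eventually_nhdsWithin_iff.1 hsep).and (isOpen_Ioo.mem_nhds hc))
  have hJ : Icc (c - r / 2) (c + r / 2) ⊆ Metric.ball c r := by
    rw [← Real.closedBall_eq_Icc]; exact Metric.closedBall_subset_ball (half_lt_self hr)
  have hJ01 : Icc (c - r / 2) (c + r / 2) ⊆ Icc 0 1 := fun t ht =>
    Ioo_subset_Icc_self (hball t (hJ ht)).2
  have hsepOn : ∀ a b, Icc a b ⊆ Icc (c - r / 2) (c + r / 2) → c ∉ Ioo a b →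
      ∀ i j, ∀ t ∈ Ioo a b, ℓ i t = ℓ j t → ℓ i = ℓ j := by
    intro a b hab hcab i j t ht heq
    by_contra hne
    exact (hball t (hJ (hab (Ioo_subset_Icc_self ht)))).1 (fun htc => hcab (htc ▸ ht)) i j hne heq
  have hr2 : 0 < r / 2 := half_pos hr
  obtain ⟨i, hi⟩ := exists_eqOn_Icc_of_forall_mem_Ioo (ℓ := ℓ) (by linarith : c < c + r / 2)
    (hφ.mono ((Icc_subset_Icc (by linarith) le_rfl).trans hJ01))
    (fun t ht => hsel t (hJ01 ⟨by linarith [ht.1], ht.2.le⟩))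
    (hsepOn _ _ (Icc_subset_Icc (by linarith) le_rfl) fun h => lt_irrefl _ h.1)
  obtain ⟨j, hj⟩ := exists_eqOn_Icc_of_forall_mem_Ioo (ℓ := ℓ) (by linarith : c - r / 2 < c)
    (hφ.mono ((Icc_subset_Icc le_rfl (by linarith)).trans hJ01))
    (fun t ht => hsel t (hJ01 ⟨ht.1.le, by linarith [ht.2]⟩))
    (hsepOn _ _ (Icc_subset_Icc le_rfl (by linarith)) fun h => lt_irrefl _ h.2)
  have hij : ℓ i c = ℓ j c :=
    (hi ⟨le_rfl, by linarith⟩).symm.trans (hj ⟨by linarith, le_rfl⟩)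
  exact ⟨r / 2, hr2, hJ01, i, j, eqOn_max_or_min_of_eqOn_Icc hij hj hi⟩

end Interval

section LocalToGlobal

lemma min_le_of_locally_concaveOn {χ : ℝ → ℝ} {a b : ℝ} (hχ : ContinuousOn χ (Icc a b))
    (hloc : ∀ c ∈ Ioo a b, ∃ ε > 0, Icc (c - ε) (c + ε) ⊆ Icc a b ∧
      ConcaveOn ℝ (Icc (c - ε) (c + ε)) χ) :
    ∀ t ∈ Icc a b, min (χ a) (χ b) ≤ χ t := by
  by_contra! h
  obtain ⟨t, ht, hlt⟩ := h
  obtain ⟨x₀, hx₀, hmin⟩ := isCompact_Icc.exists_isMinOn ⟨t, ht⟩ hχ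
  -- the rightmost minimum point `c` is interior, and concavity near `c` contradicts minimality
  have hT : IsCompact (Icc a b ∩ χ ⁻¹' {χ x₀}) :=
    isCompact_Icc.of_isClosed_subset
      (hχ.preimage_isClosed_of_isClosed isClosed_Icc isClosed_singleton) inter_subset_left
  obtain ⟨c, ⟨hcI, hcm⟩, hcmax⟩ := hT.exists_isGreatest ⟨x₀, hx₀, rfl⟩
  rw [mem_preimage, mem_singleton_iff] at hcm
  have hlt' : χ c < min (χ a) (χ b) := hcm ▸ (hmin ht).trans_lt hlt
  have hca : a < c := lt_of_le_of_ne hcI.1 fun h => by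
    subst h; exact (lt_irrefl _ (hlt'.trans_le (min_le_left _ _)))
  have hcb : c < b := lt_of_le_of_ne hcI.2 fun h => by
    subst h; exact (lt_irrefl _ (hlt'.trans_le (min_le_right _ _)))
  obtain ⟨ε, hε, hsub, hconc⟩ := hloc c ⟨hca, hcb⟩
  have hl : χ c ≤ χ (c - ε) := hcm ▸ hmin (hsub ⟨le_rfl, by linarith⟩)
  have hr : χ c < χ (c + ε) := by
    refine lt_of_le_of_ne (hcm ▸ hmin (hsub ⟨by linarith, le_rfl⟩)) fun h => ?_
    have := hcmax ⟨hsub ⟨by linarith, le_rfl⟩, (h.symm.trans hcm :)⟩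
    linarith
  have hmid := hconc.2 (x := c - ε) (y := c + ε) ⟨le_rfl, by linarith⟩ ⟨by linarith, le_rfl⟩
    (by norm_num : (0 : ℝ) ≤ 1 / 2) (by norm_num : (0 : ℝ) ≤ 1 / 2) (by norm_num)
  rw [smul_eq_mul, smul_eq_mul, smul_eq_mul, smul_eq_mul,
    show 1 / 2 * (c - ε) + 1 / 2 * (c + ε) = c by ring] at hmid
  linarith

lemma chord_le_of_locally_concaveOn {ψ : ℝ → ℝ} (hψ : ContinuousOn ψ (Icc 0 1))
    (hloc : ∀ c ∈ Ioo (0 : ℝ) 1, ∃ ε > 0, Icc (c - ε) (c + ε) ⊆ Icc 0 1 ∧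
      ConcaveOn ℝ (Icc (c - ε) (c + ε)) ψ) :
    ∀ t ∈ Icc (0 : ℝ) 1, (1 - t) * ψ 0 + t * ψ 1 ≤ ψ t := by
  set chord : ℝ →ᵃ[ℝ] ℝ := AffineMap.lineMap (ψ 0) (ψ 1)
  have key := min_le_of_locally_concaveOn (χ := ψ + ⇑(-chord))
    (hψ.add (-chord).continuous_of_finiteDimensional.continuousOn) fun c hc => by
      obtain ⟨ε, hε, hsub, hconc⟩ := hloc c hc
      exact ⟨ε, hε, hsub, hconc.add ((-chord).concaveOn (convex_Icc _ _))⟩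
  have h0 : (ψ + ⇑(-chord)) 0 = 0 := by simp [chord]
  have h1 : (ψ + ⇑(-chord)) 1 = 0 := by simp [chord]
  intro t ht
  have := key t ht
  rw [h0, h1, min_self, Pi.add_apply, AffineMap.coe_neg, Pi.neg_apply,
    AffineMap.lineMap_apply_module, smul_eq_mul, smul_eq_mul] at this
  linarith

end LocalToGlobal

section Concavity

variable {ι : Type*} [Fintype ι]

lemma continuous_sumAbsDiff {E : Type*} [NormedAddCommGroup E] [NormedSpace ℝ E]
    [FiniteDimensional ℝ E] (g : ι → E →ᵃ[ℝ] ℝ) : Continuous (sumAbsDiff g) :=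
  continuous_finsetSum _ fun p _ =>
    ((g p.1).continuous_of_finiteDimensional.sub (g p.2).continuous_of_finiteDimensional).abs

lemma chord_le_sub_sumAbsDiff (ℓ : ι → ℝ →ᵃ[ℝ] ℝ) {φ : ℝ → ℝ} (hφ : ContinuousOn φ (Icc 0 1))
    (hsel : ∀ t ∈ Icc (0 : ℝ) 1, ∃ i, φ t = ℓ i t) :
    ∀ t ∈ Icc (0 : ℝ) 1,
      (1 - t) * (φ - sumAbsDiff ℓ) 0 + t * (φ - sumAbsDiff ℓ) 1 ≤ (φ - sumAbsDiff ℓ) t :=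
  chord_le_of_locally_concaveOn (hφ.sub (continuous_sumAbsDiff ℓ).continuousOn) fun _ hc => by
    obtain ⟨ε, hε, hsub, i, j, hij⟩ := exists_eqOn_max_or_min_near ℓ hφ hsel hc
    exact ⟨ε, hε, hsub, concaveOn_sub_sumAbsDiff_of_eqOn (convex_Icc _ _) i j hij⟩

theorem concaveOn_sub_sumAbsDiff {E : Type*} [NormedAddCommGroup E] [NormedSpace ℝ E]
    {D : Set E} (hD : Convex ℝ D) {f : E → ℝ} (hf : ContinuousOn f D) (g : ι → E →ᵃ[ℝ] ℝ)
    (hsel : ∀ x ∈ D, ∃ i, f x = g i x) : ConcaveOn ℝ D (f - sumAbsDiff g) := by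
  refine ⟨hD, fun x hx y hy a b ha hb hab => ?_⟩
  have hmem : ∀ t ∈ Icc (0 : ℝ) 1, AffineMap.lineMap x y t ∈ D := fun t ht =>
    hD.lineMap_mem hx hy ht
  have key := chord_le_sub_sumAbsDiff (fun i => (g i).comp (AffineMap.lineMap x y))
    (φ := f ∘ AffineMap.lineMap x y) (hf.comp AffineMap.lineMap_continuous.continuousOn hmem)
    (fun t ht => hsel _ (hmem t ht)) b ⟨hb, by linarith⟩
  obtain rfl : a = 1 - b := by linarith
  have hcomp : ∀ t, sumAbsDiff (fun i => (g i).comp (AffineMap.lineMap x y)) t =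
      sumAbsDiff g (AffineMap.lineMap x y t) := fun _ => rfl
  simp only [Pi.sub_apply, Function.comp_apply, hcomp, AffineMap.lineMap_apply_zero,
    AffineMap.lineMap_apply_one] at key
  simpa only [AffineMap.lineMap_apply_module, smul_eq_mul, Pi.sub_apply] using key

end Concavity

section PiecewiseLinear

lemma IsOpen.subset_iUnion_closure_inter_interior {X ι : Type*} [TopologicalSpace X]
    [BaireSpace X] [Finite ι] {U : Set X} (hU : IsOpen U) {C : ι → Set X}
    (hC : ∀ k, IsClosed (C k)) (hcover : U ⊆ ⋃ k, C k) :
    U ⊆ ⋃ k, closure (U ∩ interior (C k)) := by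
  -- adjoin `Uᶜ` to the `C k` to cover the whole space, then apply the Baire category theorem
  have hdense : Dense (⋃ o : Option ι, interior (o.elim Uᶜ C)) := by
    refine dense_iUnion_interior_of_closed (fun o => ?_) (eq_univ_of_forall fun x => ?_)
    · cases o
      exacts [hU.isClosed_compl, hC _]
    · by_cases hx : x ∈ U
      · obtain ⟨k, hk⟩ := mem_iUnion.1 (hcover hx)
        exact mem_iUnion.2 ⟨some k, hk⟩
      · exact mem_iUnion.2 ⟨none, hx⟩
  rw [← closure_iUnion_of_finite]
  refine (hdense.open_subset_closure_inter hU).trans (closure_mono ?_)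
  rintro x ⟨hxU, hx⟩
  obtain ⟨o, hxo⟩ := mem_iUnion.1 hx
  cases o with
  | none => exact absurd hxU (interior_subset hxo)
  | some k => exact mem_iUnion.2 ⟨k, hxU, hxo⟩

variable {d : ℕ} {D : Set (Fin d → ℝ)} {f h : (Fin d → ℝ) → ℝ}

lemma IsClosedDomain.isClosed {P : Set (Fin d → ℝ)} (hP : IsClosedDomain P) : IsClosed P := by
  obtain ⟨U, -, -, rfl⟩ := hP
  exact isClosed_closure

theorem IsClosedDomain.isPLOn_of_closed_cover (hD : IsClosedDomain D) {ι : Type*} [Fintype ι]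
    {C : ι → Set (Fin d → ℝ)} (hC : ∀ k, IsClosed (C k)) (hcover : D ⊆ ⋃ k, C k)
    (hf : ∀ k, ∃ A : (Fin d → ℝ) →ᵃ[ℝ] ℝ, ∀ x ∈ D ∩ C k, f x = A x) : IsPLOn D f := by
  classical
  obtain ⟨U, -, hU, rfl⟩ := hD
  have hpiece : ∀ k, closure (U ∩ interior (C k)) ⊆ closure U ∩ C k := fun k =>
    subset_inter (closure_mono inter_subset_left)
      ((closure_mono (inter_subset_right.trans interior_subset)).trans (hC k).closure_subset)
  refine ⟨(Finset.univ.image fun k => closure (U ∩ interior (C k))).filter (·.Nonempty),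
    ?_, subset_antisymm ?_ ?_, ?_⟩
  · intro P hP
    obtain ⟨⟨k, -, rfl⟩, hne⟩ := by simpa only [Finset.mem_filter, Finset.mem_image] using hP
    exact ⟨_, closure_nonempty_iff.1 hne, hU.inter isOpen_interior, rfl⟩
  · refine iUnion₂_subset fun P hP => ?_
    obtain ⟨⟨k, -, rfl⟩, -⟩ := by simpa only [Finset.mem_filter, Finset.mem_image] using hP
    exact (hpiece k).trans inter_subset_left
  · have hU' := hU.subset_iUnion_closure_inter_interior hC (subset_closure.trans hcover)
    refine (closure_minimal hU' (isClosed_iUnion_of_finite fun _ => isClosed_closure)).trans ?_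
    intro x hx
    obtain ⟨k, hk⟩ := mem_iUnion.1 hx
    exact mem_biUnion (Finset.mem_filter.2
      ⟨Finset.mem_image_of_mem _ (Finset.mem_univ k), ⟨x, hk⟩⟩) hk
  · intro P hP
    obtain ⟨⟨k, -, rfl⟩, -⟩ := by simpa only [Finset.mem_filter, Finset.mem_image] using hP
    obtain ⟨A, hA⟩ := hf k
    exact ⟨A, fun x hx => hA x (hpiece k hx)⟩

lemma IsPLOn.neg (hf : IsPLOn D f) : IsPLOn D (-f) := by
  obtain ⟨𝒟, hdom, hcover, haff⟩ := hf
  refine ⟨𝒟, hdom, hcover, fun P hP => ?_⟩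
  obtain ⟨A, hA⟩ := haff P hP
  exact ⟨-A, fun x hx => by simp [hA x hx]⟩

lemma IsPLOn.add (hD : IsClosedDomain D) (hf : IsPLOn D f) (hh : IsPLOn D h) :
    IsPLOn D (f + h) := by
  obtain ⟨𝒟, hdom, hcover, haff⟩ := hf
  obtain ⟨ℰ, hdom', hcover', haff'⟩ := hh
  refine hD.isPLOn_of_closed_cover (C := fun PQ : 𝒟 × ℰ => PQ.1.1 ∩ PQ.2.1)
    (fun PQ => (hdom _ PQ.1.2).isClosed.inter (hdom' _ PQ.2.2).isClosed) (fun x hx => ?_)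
    fun ⟨⟨P, hP⟩, ⟨Q, hQ⟩⟩ => ?_
  · obtain ⟨P, hP, hxP⟩ := mem_iUnion₂.1 (hcover.ge hx)
    obtain ⟨Q, hQ, hxQ⟩ := mem_iUnion₂.1 (hcover'.ge hx)
    exact mem_iUnion.2 ⟨(⟨P, hP⟩, ⟨Q, hQ⟩), hxP, hxQ⟩
  · obtain ⟨A, hA⟩ := haff P hP
    obtain ⟨B, hB⟩ := haff' Q hQ
    exact ⟨A + B, fun x hx => by simp [hA x hx.2.1, hB x hx.2.2]⟩

lemma IsPLOn.sub (hD : IsClosedDomain D) (hf : IsPLOn D f) (hh : IsPLOn D h) :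
    IsPLOn D (f - h) := by
  simpa only [sub_eq_add_neg] using hf.add hD hh.neg

lemma IsClosedDomain.isPLOn_affineMap (hD : IsClosedDomain D) (A : (Fin d → ℝ) →ᵃ[ℝ] ℝ) :
    IsPLOn D A :=
  hD.isPLOn_of_closed_cover (C := fun _ : Unit => univ) (fun _ => isClosed_univ)
    (fun x _ => mem_iUnion.2 ⟨(), mem_univ x⟩) fun _ => ⟨A, fun _ _ => rfl⟩

lemma IsClosedDomain.isPLOn_abs_affineMap (hD : IsClosedDomain D) (A : (Fin d → ℝ) →ᵃ[ℝ] ℝ) :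
    IsPLOn D fun x => |A x| := by
  have hA := A.continuous_of_finiteDimensional
  refine hD.isPLOn_of_closed_cover (C := ![{x | 0 ≤ A x}, {x | A x ≤ 0}]) ?_ ?_ ?_
  · simpa [Fin.forall_fin_two] using
      ⟨isClosed_le continuous_const hA, isClosed_le hA continuous_const⟩
  · intro x _
    simpa [Fin.exists_fin_two] using le_total 0 (A x)
  · simp only [Fin.forall_fin_two]
    exact ⟨⟨A, fun x hx => abs_of_nonneg hx.2⟩, ⟨-A, fun x hx => abs_of_nonpos hx.2⟩⟩

lemma IsClosedDomain.isPLOn_sumAbsDiff (hD : IsClosedDomain D) {ι : Type*} [Fintype ι]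
    (g : ι → (Fin d → ℝ) →ᵃ[ℝ] ℝ) : IsPLOn D (sumAbsDiff g) := by
  have hsum : sumAbsDiff g = ∑ p : ι × ι, fun x => |(g p.1 - g p.2) x| := by
    ext x
    simp [sumAbsDiff, Finset.sum_apply]
  rw [hsum]
  exact Finset.sum_induction _ (IsPLOn D) (fun _ _ => IsPLOn.add hD)
    (by simpa using hD.isPLOn_affineMap 0) fun p _ => hD.isPLOn_abs_affineMap _

lemma IsPLOn.exists_affine_selection (hf : IsPLOn D f) :
    ∃ (n : ℕ) (g : Fin n → (Fin d → ℝ) →ᵃ[ℝ] ℝ), ∀ x ∈ D, ∃ i, f x = g i x := by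
  obtain ⟨𝒟, -, hcover, haff⟩ := hf
  choose G hG using haff
  refine ⟨𝒟.card, fun i => G _ (𝒟.equivFin.symm i).2, fun x hx => ?_⟩
  obtain ⟨P, hP, hxP⟩ := mem_iUnion₂.1 (hcover.ge hx)
  exact ⟨𝒟.equivFin ⟨P, hP⟩, by simpa using hG P hP x hxP⟩

end PiecewiseLinear

/-- Every continuous piecewise linear function on a convex closed domain is the
difference of two concave piecewise linear functions. -/
theorem pl_diff_concave {d : ℕ} (D : Set (Fin d → ℝ)) (hconv : Convex ℝ D)
    (hdom : IsClosedDomain D) (f : (Fin d → ℝ) → ℝ) (hf : ContinuousOn f D)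
    (hpl : IsPLOn D f) :
    ∃ p q : (Fin d → ℝ) → ℝ, IsPLOn D p ∧ IsPLOn D q ∧
      ConcaveOn ℝ D p ∧ ConcaveOn ℝ D q ∧ ∀ x ∈ D, f x = p x - q x := by
  obtain ⟨n, g, hsel⟩ := hpl.exists_affine_selection
  have hS := hdom.isPLOn_sumAbsDiff g
  exact ⟨f - sumAbsDiff g, -sumAbsDiff g, hpl.sub hdom hS, hS.neg,
    concaveOn_sub_sumAbsDiff hconv hf g hsel, (convexOn_sumAbsDiff hconv g).neg,
    fun x _ => by simp⟩
end
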